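/- arXiv:1908.08521 — 7 statements merged into one kernel-verified Lean document; each statement's English description precedes it below -/
import Mathlib

section
/- For every $n\geq 1$, if $A$ and $B$ are infinite subsets of $\mathbb{N}^n$ with $A\cup B=\mathbb{N}^n$ and $A\cap B=\emptyset$, then there exist an infinite subset $C\subseteq A$, an index $k\in\{1,\ldots,n\}$, and a sign $s\in\{+1,-1\}$ such that for every $c\in C$, the point obtained from $c$ by adding $s$ to its $k$-th coordinate lies in $B$ (in particular, when $s=-1$, the $k$-th coordinate of each $c\in C$ is at least $2$). -/
/-!
If every coordinate direction had only finitely many points of `A` adjacent to `B` in either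
sense, all these boundary points would lie in a finite box `Iic b`. Outside that box, membership
in `A` is invariant under unit steps, and the complement of the box is an upper set, so any two
points `x, y` outside it are joined by monotone staircases through `x ⊔ y`. Since `A` and `B` are
infinite, both have points outside the box, a contradiction.
-/

open Set Function

section UnitSteps

variable {ι : Type*} [DecidableEq ι] {S : Set (ι → ℕ+)} {P : (ι → ℕ+) → Prop}

theorem IsUpperSet.iff_update_of_le (hS : IsUpperSet S)
    (hP : ∀ x ∈ S, ∀ k, P x ↔ P (update x k (x k + 1))) {x : ι → ℕ+} (hx : x ∈ S)
    (k : ι) {m : ℕ+} (hm : x k ≤ m) : P x ↔ P (update x k m) := by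
  induction m using PNat.recOn with
  | one => rw [← hm.antisymm one_le, update_eq_self]
  | succ m ih =>
    rcases hm.lt_or_eq with hlt | heq
    · have hle : x k ≤ m := PNat.lt_add_one_iff.1 hlt
      have hy : update x k m ∈ S := hS (le_update_self_iff.2 hle) hx
      simpa only [update_self, update_idem] using (ih hle).trans (hP _ hy k)
    · rw [← heq, update_eq_self]

theorem IsUpperSet.iff_of_le [Fintype ι] (hS : IsUpperSet S)
    (hP : ∀ x ∈ S, ∀ k, P x ↔ P (update x k (x k + 1))) {x y : ι → ℕ+} (hx : x ∈ S)
    (hxy : x ≤ y) : P x ↔ P y := by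
  suffices ∀ s : Finset ι, P x ↔ P (s.piecewise y x) by simpa using this Finset.univ
  intro s
  induction s using Finset.induction_on with
  | empty => simp
  | insert j s _ ih =>
    rw [Finset.piecewise_insert]
    have hx' : s.piecewise y x ∈ S := hS (Finset.le_piecewise_of_le_of_le _ hxy le_rfl) hx
    exact ih.trans <| hS.iff_update_of_le hP hx' j <|
      Finset.piecewise_le_of_le_of_le _ le_rfl hxy j

theorem IsUpperSet.iff_of_mem [Fintype ι] (hS : IsUpperSet S)
    (hP : ∀ x ∈ S, ∀ k, P x ↔ P (update x k (x k + 1))) {x y : ι → ℕ+} (hx : x ∈ S)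
    (hy : y ∈ S) : P x ↔ P y :=
  (hS.iff_of_le hP hx le_sup_left).trans (hS.iff_of_le hP hy le_sup_right).symm

end UnitSteps

theorem partition_boundary_general {n : ℕ}
    (A B : Set (Fin n → ℕ+)) (hA : A.Infinite) (hB : B.Infinite)
    (hU : A ∪ B = Set.univ) (hd : A ∩ B = ∅) :
    ∃ C : Set (Fin n → ℕ+), C ⊆ A ∧ C.Infinite ∧ ∃ k : Fin n,
      ((∀ c ∈ C, Function.update c k (c k + 1) ∈ B) ∨
       (∀ c ∈ C, ∃ m : ℕ+, m + 1 = c k ∧ Function.update c k m ∈ B)) := by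
  obtain rfl : Aᶜ = B := (isCompl_iff.2 ⟨disjoint_iff.2 hd, codisjoint_iff.2 hU⟩).compl_eq
  by_cases hplus : ∃ k, {a ∈ A | update a k (a k + 1) ∈ Aᶜ}.Infinite
  · obtain ⟨k, hk⟩ := hplus
    exact ⟨_, sep_subset _ _, hk, k, Or.inl fun c hc => hc.2⟩
  by_cases hminus : ∃ k, {a ∈ A | ∃ m : ℕ+, m + 1 = a k ∧ update a k m ∈ Aᶜ}.Infinite
  · obtain ⟨k, hk⟩ := hminus
    exact ⟨_, sep_subset _ _, hk, k, Or.inr fun c hc => hc.2⟩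
  push Not at hplus hminus
  obtain ⟨b, hb⟩ := ((finite_iUnion hplus).union (finite_iUnion hminus)).bddAbove
  have hstep : ∀ x ∈ (Iic b)ᶜ, ∀ k, x ∈ A ↔ update x k (x k + 1) ∈ A := by
    intro x hx k
    have hxy : x ≤ update x k (x k + 1) := le_update_self_iff.2 (PNat.lt_add_right _ _).le
    refine ⟨fun hxA => ?_, fun hyA => ?_⟩ <;> by_contra h
    · exact hx (hb (Or.inl (mem_iUnion.2 ⟨k, hxA, h⟩)))
    · have hback : update (update x k (x k + 1)) k (x k) ∈ Aᶜ := by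
        rwa [update_idem, update_eq_self]
      exact hx <| hxy.trans <| hb <| Or.inr <|
        mem_iUnion.2 ⟨k, hyA, x k, (update_self k _ x).symm, hback⟩
  obtain ⟨x, hxA, hx⟩ := (hA.sdiff (finite_Iic b)).nonempty
  obtain ⟨y, hyB, hy⟩ := (hB.sdiff (finite_Iic b)).nonempty
  exact (hyB (((isLowerSet_Iic b).compl.iff_of_mem hstep hx hy).1 hxA)).elim

/-- Lemma 1.3: if `A, B` partition `ℕ^n` (`ℕ` the positive integers) into two
infinite sets, then there are an infinite `C ⊆ A`, a coordinate `k` and a sign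
such that either adding `1` to the `k`-th coordinate of each point of `C` lands
in `B`, or subtracting `1` from the `k`-th coordinate of each point of `C`
(which is then at least `2`) lands in `B`. -/
theorem partition_boundary {n : ℕ} (hn : 1 ≤ n)
    (A B : Set (Fin n → ℕ+)) (hA : A.Infinite) (hB : B.Infinite)
    (hU : A ∪ B = Set.univ) (hd : A ∩ B = ∅) :
    ∃ C : Set (Fin n → ℕ+), C ⊆ A ∧ C.Infinite ∧ ∃ k : Fin n,
      ((∀ c ∈ C, Function.update c k (c k + 1) ∈ B) ∨
       (∀ c ∈ C, ∃ m : ℕ+, m + 1 = c k ∧ Function.update c k m ∈ B)) :=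
  partition_boundary_general A B hA hB hU hd
end

section
/- Define a multiplication on $S^0 = (\mathscr{S}_n\times(\mathbb{N}\times\mathbb{N})^n)\cup\{0\}$ by adjoining a zero element $0$ (with $0\cdot x = x\cdot 0 = 0$ for all $x$) to the semidirect product operation $(\alpha,[\mathbf{x},\mathbf{y}])\cdot(\beta,[\mathbf{u},\mathbf{v}]) = (\alpha\circ\beta,\ [(\mathbf{x})\beta+\max\{(\mathbf{y})\beta,\mathbf{u}\}-(\mathbf{y})\beta,\ \mathbf{v}+\max\{(\mathbf{y})\beta,\mathbf{u}\}-\mathbf{u}]$ (coordinatewise max). This operation is associative. -/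
/-- Elements of the semigroup `S = 𝒮ₙ ⋉ (ℕ × ℕ)ⁿ`: a permutation of
`{1,…,n}` together with a pair of tuples of positive integers. -/
abbrev Gel (n : ℕ) := Equiv.Perm (Fin n) × (Fin n → ℕ+) × (Fin n → ℕ+)

/-- The right action of a permutation on tuples: `((x)σ)_i = x_{σ⁻¹(i)}`. -/
def ract {n : ℕ} (σ : Equiv.Perm (Fin n)) (x : Fin n → ℕ+) : Fin n → ℕ+ :=
  fun i => x (σ.symm i)

/-- The semidirect product operation
`(α,[x,y])·(β,[u,v]) = (α∘β, [(x)β + max{(y)β,u} - (y)β, v + max{(y)β,u} - u])`,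
where `α∘β` is the composition of the permutations acting on the right
(first `α`, then `β`) and max and subtraction are coordinatewise. -/
def gmul {n : ℕ} (a b : Gel n) : Gel n :=
  (b.1 * a.1,
   fun i => ract b.1 a.2.1 i + max (ract b.1 a.2.2 i) (b.2.1 i) - ract b.1 a.2.2 i,
   fun i => b.2.2 i + max (ract b.1 a.2.2 i) (b.2.1 i) - b.2.1 i)

/-- The operation on `S⁰ = S ∪ {0}` obtained by adjoining a zero element
(modelled by `none`) to the semidirect product operation. -/
def gmul0 {n : ℕ} : Option (Gel n) → Option (Gel n) → Option (Gel n)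
  | some a, some b => some (gmul a b)
  | _, _ => none

lemma pnat_coe_max (a b : ℕ+) : ((a ⊔ b : ℕ+) : ℕ) = (a : ℕ) ⊔ (b : ℕ) := by
  rcases le_total a b with h | h
  · rw [max_eq_right h, max_eq_right ((PNat.coe_le_coe _ _).mpr h)]
  · rw [max_eq_left h, max_eq_left ((PNat.coe_le_coe _ _).mpr h)]

set_option maxHeartbeats 3000000 in
lemma key1 (x y u v s : ℕ+) :
    (x + (y ⊔ u) - y) + ((v + (y ⊔ u) - u) ⊔ s) - (v + (y ⊔ u) - u)
      = x + (y ⊔ (u + (v ⊔ s) - v)) - y := by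
  have hx := x.pos; have hy := y.pos; have hu := u.pos
  have hv := v.pos; have hs := s.pos
  apply PNat.coe_injective
  simp only [PNat.sub_coe, PNat.add_coe, pnat_coe_max, ← PNat.coe_lt_coe]
  simp only [Nat.max_def]
  split_ifs <;> omega

set_option maxHeartbeats 3000000 in
lemma key2 (y u v s t : ℕ+) :
    t + ((v + (y ⊔ u) - u) ⊔ s) - s
      = (t + (v ⊔ s) - s) + (y ⊔ (u + (v ⊔ s) - v)) - (u + (v ⊔ s) - v) := by
  have hy := y.pos; have hu := u.pos
  have hv := v.pos; have hs := s.pos; have ht := t.pos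
  apply PNat.coe_injective
  simp only [PNat.sub_coe, PNat.add_coe, pnat_coe_max, ← PNat.coe_lt_coe]
  simp only [Nat.max_def]
  split_ifs <;> omega

lemma gmul_assoc {n : ℕ} (a b c : Gel n) :
    gmul (gmul a b) c = gmul a (gmul b c) := by
  refine Prod.ext (mul_assoc _ _ _).symm (Prod.ext ?_ ?_) <;> funext i <;>
    simp only [gmul, ract, Equiv.Perm.mul_def, Equiv.symm_trans_apply]
  · exact key1 _ _ _ _ _
  · exact key2 _ _ _ _ _

/-- The semidirect product operation with adjoined zero is associative
(and `0` is indeed a two-sided zero). -/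
theorem gmul0_assoc (n : ℕ) :
    (∀ a b c : Option (Gel n), gmul0 (gmul0 a b) c = gmul0 a (gmul0 b c)) ∧
    (∀ a : Option (Gel n), gmul0 none a = none ∧ gmul0 a none = none) := by
  constructor
  · rintro (_ | a) (_ | b) (_ | c) <;> simp [gmul0, gmul_assoc]
  · rintro (_ | a) <;> simp [gmul0]
end

section
/- In the semigroup $S=\mathscr{S}_n\ltimes(\mathbb{N}\times\mathbb{N})^n$ with operation $(\alpha,[\mathbf{x},\mathbf{y}])\cdot(\beta,[\mathbf{u},\mathbf{v}]) = (\alpha\circ\beta,\ [(\mathbf{x})\beta+\max\{(\mathbf{y})\beta,\mathbf{u}\}-(\mathbf{y})\beta,\ \mathbf{v}+\max\{(\mathbf{y})\beta,\mathbf{u}\}-\mathbf{u}])$, for fixed $\sigma\in\mathscr{S}_n$ and $\mathbf{a},\mathbf{b}\in\mathbb{N}^n$ define $\mathbf{q},\mathbf{p}\in\mathbb{N}^n$ coordinatewise by: if $b_i\geq a_i$ then $q_i=1,\ p_i=b_i-a_i+1$; if $b_i<a_i$ then $p_i=1,\ q_i=a_i-b_i+1$. Then left translation by $(\mathrm{id},[(\mathbf{q})\sigma^{-1},(\mathbf{p})\sigma^{-1}])$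 maps $(\sigma,[\mathbf{b},\mathbf{x}])$ to $(\sigma,[\mathbf{a},\mathbf{x}])$ for every $\mathbf{x}\in\mathbb{N}^n$; in particular it restricts to a bijection from $L_\sigma^{\mathbf{b}}=\{(\sigma,[\mathbf{b},\mathbf{x}]):\mathbf{x}\in\mathbb{N}^n\}$ onto $L_\sigma^{\mathbf{a}}=\{(\sigma,[\mathbf{a},\mathbf{x}]):\mathbf{x}\in\mathbb{N}^n\}$. -/
/-- For `σ ∈ 𝒮ₙ` and `a, b ∈ ℕⁿ`, defining `q, p` coordinatewise by
`qᵢ = 1, pᵢ = bᵢ - aᵢ + 1` if `bᵢ ≥ aᵢ` and `pᵢ = 1, qᵢ = aᵢ - bᵢ + 1`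
otherwise, left translation by `(id, [(q)σ⁻¹, (p)σ⁻¹])` sends `(σ,[b,x])`
to `(σ,[a,x])` for every `x`; in particular it restricts to a bijection from
`L_σ^b = {(σ,[b,x]) : x ∈ ℕⁿ}` onto `L_σ^a`. -/
theorem left_translation_between_L {n : ℕ} (σ : Equiv.Perm (Fin n))
    (a b : Fin n → ℕ+)
    (q p : Fin n → ℕ+)
    (hq : ∀ i, ((a i : ℕ) ≤ b i → (q i : ℕ) = 1) ∧
               ((b i : ℕ) < a i → (q i : ℕ) = (a i : ℕ) - b i + 1))
    (hp : ∀ i, ((a i : ℕ) ≤ b i → (p i : ℕ) = (b i : ℕ) - a i + 1) ∧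
               ((b i : ℕ) < a i → (p i : ℕ) = 1)) :
    (∀ x : Fin n → ℕ+,
      gmul (1, ract σ⁻¹ q, ract σ⁻¹ p) (σ, b, x) = (σ, a, x)) ∧
    Set.BijOn (gmul (1, ract σ⁻¹ q, ract σ⁻¹ p))
      {s : Gel n | ∃ x : Fin n → ℕ+, s = (σ, b, x)}
      {s : Gel n | ∃ x : Fin n → ℕ+, s = (σ, a, x)} := by
  have key : ∀ x : Fin n → ℕ+,
      gmul (1, ract σ⁻¹ q, ract σ⁻¹ p) (σ, b, x) = (σ, a, x) := by
    intro x
    have hqσ : ∀ i, ract σ (ract σ⁻¹ q) i = q i := by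
      intro i; simp [ract, Equiv.Perm.inv_def]
    have hpσ : ∀ i, ract σ (ract σ⁻¹ p) i = p i := by
      intro i; simp [ract, Equiv.Perm.inv_def]
    have hpb : ∀ i, (p i : ℕ) ≤ b i := by
      intro i
      rcases le_or_gt (a i : ℕ) (b i) with h | h
      · have h1 := (hp i).1 h; have h2 := (a i).pos; omega
      · have h1 := (hp i).2 h; have h2 := (b i).pos; omega
    have hmax : ∀ i, max (p i) (b i) = b i := fun i =>
      max_eq_right (by exact_mod_cast hpb i)
    simp only [gmul, mul_one, hqσ, hpσ]
    refine Prod.ext rfl (Prod.ext ?_ ?_) <;> funext i <;> dsimp only <;>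
      apply PNat.coe_injective
    · rw [hmax i]
      have hlt : p i < q i + b i := by
        apply (PNat.coe_lt_coe _ _).mp
        have h1 := (q i).pos
        push_cast
        have := hpb i
        omega
      rw [PNat.sub_coe, if_pos hlt]
      rcases le_or_gt (a i : ℕ) (b i) with h | h
      · have h1 := (hp i).1 h
        have h2 := (hq i).1 h
        have h3 := (a i).pos
        push_cast
        omega
      · have h1 := (hp i).2 h
        have h2 := (hq i).2 h
        push_cast
        omega
    · rw [hmax i]
      have hlt : b i < x i + b i := by
        apply (PNat.coe_lt_coe _ _).mp
        have h1 := (x i).pos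
        push_cast
        omega
      rw [PNat.sub_coe, if_pos hlt]
      push_cast
      omega
  refine ⟨key, ?_, ?_, ?_⟩
  · rintro s ⟨x, rfl⟩
    exact ⟨x, key x⟩
  · rintro s ⟨x, rfl⟩ t ⟨y, rfl⟩ h
    rw [key x, key y] at h
    have : x = y := by
      have := congrArg (fun z => z.2.2) h
      simpa using this
    rw [this]
  · rintro s ⟨x, rfl⟩
    exact ⟨(σ, b, x), ⟨x, rfl⟩, key x⟩
end

section
/- Let $S^0$ be the semigroup $\mathscr{S}_n\ltimes(\mathbb{N}\times\mathbb{N})^n$ with adjoined zero, equipped with a Hausdorff locally compact topology making multiplication separately continuous, and suppose the topology is not discrete. Then for every open neighbourhood $U$ of $0$ and every $\sigma\in\mathscr{S}_n$ there exists $\mathbf{a}\in\mathbb{N}^n$ such that the set $L_\sigma^{\mathbf{a}}\cap U$ is infinite, where $L_\sigma^{\mathbf{a}}=\{(\sigma,[\mathbf{a},\mathbf{x}]) : \mathbf{x}\in\mathbb{N}^n\}$. -/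
/-!
Every point of `S` is isolated: left and right multiplication by the idempotent `(1, e, e)`,
where `e` is `c` at `i` and `1` elsewhere, fixes exactly the points whose relevant `i`-th
coordinate is at least `c`. These fixed-point sets are closed, so their complements cut out an
open neighbourhood of `s` inside a finite box. As the topology is not discrete, `0` is then not
isolated.

Suppose all rows `L_σ^a ∩ U` are finite. Left translation by `(τ⁻¹σ, 1, 1)` maps `L_τ^a`
onto `L_σ^a`, so some open `V ∋ 0` has all rows `L_τ^a ∩ V` finite; take a compact
neighbourhood `K ⊆ V` of `0`. A compact set avoiding `0` consists of isolated points and is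
finite, so `K \ W` is finite for `W` the preimage of `int K` under the right shift `x ↦ x + 1`
of the last coordinate. The top point of every nonempty row of `K` lies in `K \ W`, hence `K`
has finitely many nonempty rows, each finite, and `K` is a finite neighbourhood of the
non-isolated point `0`.
-/

open Filter Set Topology

section Algebra

variable {n : ℕ}

lemma ract_one (x : Fin n → ℕ+) : ract 1 x = x := rfl

lemma ract_mulSingle (σ : Equiv.Perm (Fin n)) (i : Fin n) (c : ℕ+) :
    ract σ (Pi.mulSingle i c) = Pi.mulSingle (σ i) c := by
  funext j
  simp only [ract, Pi.mulSingle_apply, Equiv.symm_apply_eq]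

lemma mulSingle_le_iff {i : Fin n} {c : ℕ+} {f : Fin n → ℕ+} :
    Pi.mulSingle i c ≤ f ↔ c ≤ f i := by
  refine ⟨fun h => by simpa using h i, fun h j => ?_⟩
  rcases eq_or_ne j i with rfl | hj
  · simpa using h
  · simp [hj, one_le]

lemma PNat.add_sub_cancel_left {a b : ℕ+} : a + b - a = b := by
  rw [add_comm, PNat.add_sub]

def idem (i : Fin n) (c : ℕ+) : Gel n := (1, Pi.mulSingle i c, Pi.mulSingle i c)

lemma gmul_idem_eq_self_iff {i : Fin n} {c : ℕ+} {q : Gel n} :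
    gmul q (idem i c) = q ↔ c ≤ q.2.2 i := by
  obtain ⟨γ, w, x⟩ := q
  simp only [gmul, idem, ract_one, one_mul, Prod.mk.injEq, true_and]
  constructor
  · rintro ⟨-, h⟩
    simpa [PNat.add_sub_cancel_left] using congrFun h i
  · intro h
    have h' := mulSingle_le_iff.2 h
    constructor <;> funext j <;>
      simp [max_eq_left (h' j), PNat.add_sub, PNat.add_sub_cancel_left]

lemma idem_gmul_eq_self_iff {i : Fin n} {c : ℕ+} {q : Gel n} :
    gmul (idem i c) q = q ↔ c ≤ q.2.1 (q.1 i) := by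
  obtain ⟨γ, w, x⟩ := q
  simp only [gmul, idem, ract_mulSingle, mul_one, Prod.mk.injEq, true_and]
  constructor
  · rintro ⟨h, -⟩
    simpa [PNat.add_sub_cancel_left] using congrFun h (γ i)
  · intro h
    have h' := mulSingle_le_iff.2 h
    constructor <;> funext j <;>
      simp [max_eq_right (h' j), PNat.add_sub, PNat.add_sub_cancel_left]

lemma gmul_shift (q : Gel n) : gmul q (1, 1, 2) = (q.1, q.2.1, q.2.2 + 1) := by
  obtain ⟨γ, w, x⟩ := q
  simp only [gmul, ract_one, one_mul, Prod.mk.injEq, true_and]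
  constructor <;> funext j <;>
    simp only [max_eq_left (one_le : 1 ≤ x j), Pi.ofNat_apply, Pi.add_apply]
  · exact PNat.add_sub
  · rw [show (2 : ℕ+) + x j = x j + 1 + 1 by ring, PNat.add_sub]

lemma gmul_translate_row (σ τ : Equiv.Perm (Fin n)) (a x : Fin n → ℕ+) :
    gmul (τ⁻¹ * σ, 1, 1) (τ, a, x) = (σ, a, x) := by
  simp only [gmul, mul_inv_cancel_left, Prod.mk.injEq, true_and]
  constructor <;> funext j <;> simp [ract, PNat.add_sub, PNat.add_sub_cancel_left]

end Algebra

section Rows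

variable {n : ℕ}

lemma not_add_one_le {ι : Type*} [Nonempty ι] (y : ι → ℕ+) : ¬ y + 1 ≤ y := by
  intro h
  obtain ⟨i⟩ := ‹Nonempty ι›
  exact (PNat.lt_add_right (y i) 1).not_ge (h i)

lemma finite_of_finite_rows {K : Set (Gel n)} (hrow : ∀ τ a, {x | (τ, a, x) ∈ K}.Finite)
    (htop : {q ∈ K | (q.1, q.2.1, q.2.2 + 1) ∉ K}.Finite) : K.Finite := by
  rcases isEmpty_or_nonempty (Fin n) with hn | hn
  · exact Set.toFinite K
  refine ((htop.image fun q => (q.1, q.2.1)).biUnion fun p _ =>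
    (hrow p.1 p.2).image fun x => (p.1, p.2, x)).subset ?_
  rintro ⟨τ, a, x⟩ hq
  obtain ⟨y, hy⟩ := (hrow τ a).exists_maximal ⟨x, hq⟩
  have htopy : (τ, a, y) ∈ {q ∈ K | (q.1, q.2.1, q.2.2 + 1) ∉ K} :=
    ⟨hy.prop, fun hy1 => not_add_one_le y (hy.2 hy1 fun i => (PNat.lt_add_right _ _).le)⟩
  exact mem_biUnion (mem_image_of_mem _ htopy) ⟨x, hq, rfl⟩

lemma finite_box (c : ℕ+) : {q : Gel n | ∀ i, q.2.1 i < c ∧ q.2.2 i < c}.Finite := by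
  have hbox : (Set.pi univ fun _ : Fin n => Iio c).Finite := Set.Finite.pi fun _ => finite_Iio c
  exact (finite_univ.prod (hbox.prod hbox)).subset fun q hq =>
    ⟨trivial, fun i _ => (hq i).1, fun i _ => (hq i).2⟩

end Rows

section Topology

variable {n : ℕ} [TopologicalSpace (Option (Gel n))]

lemma isOpen_singleton_some [T2Space (Option (Gel n))]
    (hsep : ∀ a : Option (Gel n),
      Continuous (fun x => gmul0 a x) ∧ Continuous (fun x => gmul0 x a))
    (s : Gel n) : IsOpen {some s} := by
  obtain ⟨M, hM⟩ := Finite.exists_le fun i => max (s.2.1 i) (s.2.2 i)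
  set O : Set (Option (Gel n)) := ⋂ i, {y | gmul0 y (some (idem i (M + 1))) ≠ y} ∩
    {y | gmul0 (some (idem i (M + 1))) y ≠ y}
  have hO : IsOpen O := isOpen_iInter_of_finite fun i =>
    (isOpen_ne_fun (hsep _).2 continuous_id).inter (isOpen_ne_fun (hsep _).1 continuous_id)
  have hsO : some s ∈ O := by
    refine mem_iInter.2 fun i => ⟨fun h => ?_, fun h => ?_⟩
    · have := gmul_idem_eq_self_iff.1 (Option.some.inj h)
      exact (PNat.lt_add_right M 1).not_ge (this.trans ((le_max_right _ _).trans (hM i)))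
    · have := idem_gmul_eq_self_iff.1 (Option.some.inj h)
      exact (PNat.lt_add_right M 1).not_ge (this.trans ((le_max_left _ _).trans (hM _)))
  have hOfin : O.Finite := by
    refine (((finite_box (M + 1)).image some).insert none).subset ?_
    rintro (_ | q) hq
    · exact mem_insert _ _
    have hq' := mem_iInter.1 hq
    refine mem_insert_of_mem _
      ⟨q, fun j => ⟨lt_of_not_ge fun h => ?_, lt_of_not_ge fun h => ?_⟩, rfl⟩
    · refine (hq' (q.1.symm j)).2 (congrArg some (idem_gmul_eq_self_iff.2 ?_))
      rwa [Equiv.apply_symm_apply]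
    · exact (hq' j).1 (congrArg some (gmul_idem_eq_self_iff.2 h))
  exact isOpen_singleton_of_finite_mem_nhds _ (hO.mem_nhds hsO) hOfin

lemma IsCompact.finite_of_none_notMem (hiso : ∀ s : Gel n, IsOpen {some s})
    {K : Set (Option (Gel n))} (hK : IsCompact K) (h0 : none ∉ K) : K.Finite := by
  refine hK.finite (IsDiscrete.of_nhdsWithin fun x hx => ?_)
  obtain ⟨s, rfl⟩ := Option.ne_none_iff_exists'.1 (ne_of_mem_of_not_mem hx h0)
  exact nhdsWithin_le_nhds.trans ((isOpen_singleton_iff_nhds_eq_pure _).1 (hiso s)).le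

end Topology

/-- Lemma 1.2: in a Hausdorff locally compact non-discrete semitopological
topology on `S⁰`, for every open neighbourhood `U` of the zero and every
permutation `σ` there is `a ∈ ℕⁿ` with `L_σ^a ∩ U` infinite. -/
theorem L_inter_U_infinite {n : ℕ} [TopologicalSpace (Option (Gel n))]
    [T2Space (Option (Gel n))] [LocallyCompactSpace (Option (Gel n))]
    (hsep : ∀ a : Option (Gel n),
      Continuous (fun x => gmul0 a x) ∧ Continuous (fun x => gmul0 x a))
    (hnd : ¬ DiscreteTopology (Option (Gel n)))
    (U : Set (Option (Gel n))) (hU : IsOpen U) (h0 : none ∈ U)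
    (σ : Equiv.Perm (Fin n)) :
    ∃ a : Fin n → ℕ+, {x : Fin n → ℕ+ | some (σ, a, x) ∈ U}.Infinite := by
  by_contra! hrowU
  have hiso := isOpen_singleton_some hsep
  have : (𝓝[≠] (none : Option (Gel n))).NeBot := by
    refine ⟨fun h => hnd (discreteTopology_iff_isOpen_singleton.2 ?_)⟩
    rintro (_ | s)
    exacts [(isOpen_singleton_iff_punctured_nhds _).2 h, hiso s]
  set V := ⋂ τ, (fun y => gmul0 (some (τ⁻¹ * σ, 1, 1)) y) ⁻¹' U
  have hV : V ∈ 𝓝 none :=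
    (isOpen_iInter_of_finite fun τ => hU.preimage (hsep _).1).mem_nhds (mem_iInter.2 fun _ => h0)
  obtain ⟨K, hK, hKV, hKc⟩ := local_compact_nhds hV
  set W := (fun y => gmul0 y (some (1, 1, 2))) ⁻¹' interior K
  have hW : IsOpen W := isOpen_interior.preimage (hsep _).2
  have hKW : (K \ W).Finite :=
    (hKc.diff hW).finite_of_none_notMem hiso fun h => h.2 (mem_interior_iff_mem_nhds.2 hK)
  have hKfin : (some ⁻¹' K).Finite := by
    refine finite_of_finite_rows (fun τ a => (hrowU a).subset fun x hx => ?_)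
      ((hKW.preimage (Option.some_injective _).injOn).subset ?_)
    · simpa [gmul0, gmul_translate_row] using mem_iInter.1 (hKV hx) τ
    · rintro q ⟨hq, hq1⟩
      refine ⟨hq, fun hW => hq1 (interior_subset (s := K) ?_)⟩
      rwa [← gmul_shift]
  refine infinite_of_mem_nhds none hK (((hKfin.image some).insert none).subset ?_)
  rintro (_ | q) hq
  exacts [mem_insert _ _, mem_insert_of_mem _ ⟨q, hq, rfl⟩]
end

section
/- Let $S^0$ be the semigroup $\mathscr{S}_n\ltimes(\mathbb{N}\times\mathbb{N})^n$ with adjoined zero, equipped with a Hausdorff locally compact non-discrete topology making multiplication separately continuous. Then for every open neighbourhood $U$ of $0$, every $\sigma\in\mathscr{S}_n$, and every $\mathbf{a}\in\mathbb{N}^n$, the set $L_\sigma^{\mathbf{a}}\setminus U$ is finite, where $L_\sigma^{\mathbf{a}}=\{(\sigma,[\mathbf{a},\mathbf{x}]) : \mathbf{x}\in\mathbb{N}^n\}$. -/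
section AlmostMapsTo

variable {α β : Type*}

def AlmostMapsTo (f : α → α) (A : Set α) : Prop :=
  {x ∈ A | f x ∉ A}.Finite

lemma AlmostMapsTo.preimage {f : β → β} {g : α → α} {A : Set β} (h : AlmostMapsTo f A)
    {i : α → β} (hi : Function.Injective i) (hfg : ∀ x, f (i x) = i (g x)) :
    AlmostMapsTo g (i ⁻¹' A) :=
  (Set.Finite.preimage hi.injOn h).subset fun x hx =>
    ⟨hx.1, by simpa only [Set.mem_preimage, hfg] using hx.2⟩

lemma AlmostMapsTo.exists_forall_iterate_mem {f : α → α} {A : Set α} (h : AlmostMapsTo f A)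
    {φ : α → β} (hφ : ∀ x, φ (f x) = φ x) (hA : (φ '' A).Infinite) :
    ∃ x ∈ A, ∀ t, f^[t] x ∈ A := by
  obtain ⟨_, ⟨x, hxA, rfl⟩, hxE⟩ := (hA.sdiff (h.image φ)).nonempty
  refine ⟨x, hxA, fun t => ?_⟩
  induction t with
  | zero => exact hxA
  | succ t ih =>
    have hφt : φ (f^[t] x) = φ x := by
      simpa using Function.Semiconj.iterate_right (gb := id) hφ t x
    rw [Function.iterate_succ_apply']
    by_contra hout
    exact hxE ⟨f^[t] x, ⟨ih, hout⟩, hφt⟩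

lemma exists_Ici_subset_of_almostMapsTo {ι : Type*} [Fintype ι] [DecidableEq ι]
    {Y : Set (ι → ℕ+)} (hY : Y.Infinite)
    (hstep : ∀ j, AlmostMapsTo (fun y => Function.update y j (y j + 1)) Y) :
    ∃ y₀, Set.Ici y₀ ⊆ Y := by
  obtain ⟨y₀, hy₀Y, hy₀E⟩ := (hY.sdiff (Set.finite_iUnion hstep).lowerClosure).nonempty
  refine ⟨y₀, fun y hy => ?_⟩
  induction y using WellFoundedLT.induction with
  | _ y ih =>
    rcases (Set.mem_Ici.1 hy).eq_or_lt with rfl | hlt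
    · exact hy₀Y
    obtain ⟨-, j, hj⟩ := Pi.lt_def.1 hlt
    have hyj : y j - 1 + 1 = y j := PNat.sub_add_of_lt (one_le.trans_lt hj)
    have hy'y : Function.update y j (y j - 1) < y := by
      simpa using update_lt_update_iff (x := y) (i := j).2
        ((PNat.lt_add_right (y j - 1) 1).trans_eq hyj)
    have hy₀y' : y₀ ≤ Function.update y j (y j - 1) :=
      le_update_iff.2 ⟨PNat.le_sub_one_of_lt hj, fun i _ => hy i⟩
    have hy'succ : Function.update (Function.update y j (y j - 1)) j
        (Function.update y j (y j - 1) j + 1) = y := by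
      rw [Function.update_idem, Function.update_self, hyj, Function.update_eq_self]
    by_contra hyY
    exact hy₀E
      ⟨_, Set.mem_iUnion.2 ⟨j, ih _ hy'y hy₀y', fun h => hyY (hy'succ ▸ h)⟩, hy₀y'⟩

end AlmostMapsTo

section Topology

open Topology

variable {X : Type*} [TopologicalSpace X] {z : X}

lemma IsCompact.finite_diff_of_isOpen_singleton (hiso : ∀ x ≠ z, IsOpen {x}) {K W : Set X}
    (hK : IsCompact K) (hW : IsOpen W) (hz : z ∈ W) : (K \ W).Finite :=
  (hK.diff hW).finite <| isDiscrete_iff_forall_mem_exists_isOpen.2 fun x hx =>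
    ⟨{x}, hiso x (ne_of_mem_of_not_mem hz hx.2).symm,
      Set.inter_eq_left.2 (Set.singleton_subset_iff.2 hx)⟩

lemma almostMapsTo_of_isCompact (hiso : ∀ x ≠ z, IsOpen {x}) {K : Set X} (hK : IsCompact K)
    (hKz : K ∈ 𝓝 z) {f : X → X} (hf : Continuous f) (hfz : f z = z) : AlmostMapsTo f K :=
  (hK.finite_diff_of_isOpen_singleton hiso (isOpen_interior.preimage hf)
    (by rw [Set.mem_preimage, hfz]; exact mem_interior_iff_mem_nhds.2 hKz)).subset
    fun _ hx => ⟨hx.1, fun hfx => hx.2 (interior_subset hfx)⟩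

lemma infinite_of_mem_nhds_of_isOpen_singleton [T1Space X] (hiso : ∀ x ≠ z, IsOpen {x})
    (hnd : ¬ DiscreteTopology X) {K : Set X} (hK : K ∈ 𝓝 z) : K.Infinite := fun hfin =>
  hnd <| discreteTopology_iff_isOpen_singleton.2 fun x => by
    rcases eq_or_ne x z with rfl | hx
    · exact isOpen_singleton_of_finite_mem_nhds x hK hfin
    · exact hiso x hx

end Topology

lemma PNat.pi_add_sub {ι : Type*} (x y : ι → ℕ+) : x + y - y = x :=
  funext fun _ => PNat.add_sub

lemma Pi.mulSingle_le_iff {ι α : Type*} [DecidableEq ι] [Preorder α] [One α] [IsBotOneClass α]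
    (k : ι) (m : α) (v : ι → α) : Pi.mulSingle k m ≤ v ↔ m ≤ v k := by
  refine ⟨fun h => by simpa using h k, fun h i => ?_⟩
  rcases eq_or_ne i k with rfl | hik
  · simpa using h
  · simp [Pi.mulSingle_eq_of_ne hik]


namespace Gel

variable {n : ℕ}

lemma gmul_of_ract_le {a b : Gel n} (h : ract b.1 a.2.2 ≤ b.2.1) :
    gmul a b = (b.1 * a.1, ract b.1 a.2.1 + b.2.1 - ract b.1 a.2.2, b.2.2) := by
  refine Prod.ext rfl (Prod.ext ?_ ?_) <;> funext i
  · simp only [gmul, max_eq_right (h i), Pi.sub_apply, Pi.add_apply]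
  · simp only [gmul, max_eq_right (h i), PNat.add_sub]

lemma gmul_of_le_ract {a b : Gel n} (h : b.2.1 ≤ ract b.1 a.2.2) :
    gmul a b = (b.1 * a.1, ract b.1 a.2.1, b.2.2 + ract b.1 a.2.2 - b.2.1) := by
  refine Prod.ext rfl (Prod.ext ?_ ?_) <;> funext i
  · simp only [gmul, max_eq_left (h i), PNat.add_sub]
  · simp only [gmul, max_eq_left (h i), Pi.sub_apply, Pi.add_apply]

lemma ract_one (x : Fin n → ℕ+) : ract 1 x = x := rfl

lemma ract_mulSingle (β : Equiv.Perm (Fin n)) (k : Fin n) (m : ℕ+) :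
    ract β (Pi.mulSingle k m) = Pi.mulSingle (β k) m :=
  Pi.mulSingle_comp_equiv β.symm k m

def idem (w : Fin n → ℕ+) : Gel n := (1, w, w)

lemma gmul_idem_eq_self_iff (s : Gel n) (w : Fin n → ℕ+) :
    gmul s (idem w) = s ↔ w ≤ s.2.2 := by
  refine ⟨fun h => ?_, fun h => ?_⟩
  · have hv : (gmul s (idem w)).2.2 = s.2.2 ⊔ w := by
      funext i
      simp only [gmul, idem, ract_one, add_comm (w i), PNat.add_sub]
      rfl
    rw [h] at hv
    exact left_eq_sup.1 hv
  · rw [gmul_of_le_ract h]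
    simp only [idem, one_mul, ract_one, add_comm w, PNat.pi_add_sub]

lemma idem_gmul_eq_self_iff (s : Gel n) (w : Fin n → ℕ+) :
    gmul (idem w) s = s ↔ ract s.1 w ≤ s.2.1 := by
  refine ⟨fun h => ?_, fun h => ?_⟩
  · have hu : (gmul (idem w) s).2.1 = ract s.1 w ⊔ s.2.1 := by
      funext i
      simp only [gmul, idem, add_comm (ract s.1 w i), PNat.add_sub]
      rfl
    rw [h] at hu
    exact right_eq_sup.1 hu
  · rw [gmul_of_ract_le h]
    simp only [idem, mul_one, add_comm (ract s.1 w), PNat.pi_add_sub]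

lemma gmul_idem_mulSingle_ne_iff (s : Gel n) (k : Fin n) (m : ℕ+) :
    gmul s (idem (Pi.mulSingle k (m + 1))) ≠ s ↔ s.2.2 k ≤ m := by
  rw [Ne, gmul_idem_eq_self_iff, Pi.mulSingle_le_iff, not_le, PNat.lt_add_one_iff]

lemma idem_mulSingle_gmul_ne_iff (s : Gel n) (k : Fin n) (m : ℕ+) :
    gmul (idem (Pi.mulSingle k (m + 1))) s ≠ s ↔ s.2.1 (s.1 k) ≤ m := by
  rw [Ne, idem_gmul_eq_self_iff, ract_mulSingle, Pi.mulSingle_le_iff, not_le,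
    PNat.lt_add_one_iff]

lemma gmul_mulSingle_two (s : Gel n) (j : Fin n) :
    gmul s (1, 1, Pi.mulSingle j 2) = (s.1, s.2.1, Function.update s.2.2 j (s.2.2 j + 1)) := by
  rw [gmul_of_le_ract (fun _ => one_le)]
  refine Prod.ext (one_mul _) (Prod.ext rfl ?_)
  funext i
  rcases eq_or_ne i j with rfl | hij
  · simp only [Pi.sub_apply, Pi.add_apply, Pi.one_apply, ract_one, Pi.mulSingle_eq_same,
      Function.update_self]
    rw [show (2 : ℕ+) + s.2.2 i = s.2.2 i + 1 + 1 by rw [add_assoc, add_comm]; rfl, PNat.add_sub]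
  · simp only [Pi.sub_apply, Pi.add_apply, Pi.one_apply, ract_one, Pi.mulSingle_eq_of_ne hij,
      Function.update_of_ne hij]
    rw [add_comm, PNat.add_sub]

lemma gmul_shift (σ : Equiv.Perm (Fin n)) (a x y : Fin n → ℕ+) :
    gmul (σ, a, y + x) (1, y + 1, 1) = (σ, a, x) := by
  rw [gmul_of_le_ract (fun i => add_le_add_right (one_le : 1 ≤ x i) (y i))]
  refine Prod.ext (one_mul _) (Prod.ext rfl ?_)
  funext i
  simp only [Pi.sub_apply, Pi.add_apply, Pi.one_apply, ract_one]
  rw [add_comm 1, add_comm (y i), add_assoc, PNat.add_sub]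

lemma gmul_transport (β σ : Equiv.Perm (Fin n)) (a u v : Fin n → ℕ+) :
    gmul (β⁻¹ * σ, a ∘ β, u ∘ β) (β, u, v) = (σ, a, v) := by
  have hu : ract β (u ∘ β) = u := funext fun i => congrArg u (β.apply_symm_apply i)
  have ha : ract β (a ∘ β) = a := funext fun i => congrArg a (β.apply_symm_apply i)
  rw [gmul_of_ract_le hu.le]
  simp only [hu, ha, mul_inv_cancel_left, PNat.pi_add_sub]

open Function in
lemma isOpen_singleton_of_ne_none [TopologicalSpace (Option (Gel n))] [T2Space (Option (Gel n))]
    (hsep : ∀ a : Option (Gel n),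
      Continuous (fun x => gmul0 a x) ∧ Continuous (fun x => gmul0 x a))
    {x : Option (Gel n)} (hx : x ≠ none) : IsOpen {x} := by
  obtain ⟨g, rfl⟩ := Option.ne_none_iff_exists'.1 hx
  obtain ⟨M, hM⟩ := Finite.exists_le (g.2.1 ⊔ g.2.2)
  set e : Fin n → Option (Gel n) := fun k => some (idem (Pi.mulSingle k (M + 1)))
  set N : Set (Option (Gel n)) := {none}ᶜ ∩
    ⋂ k, (fixedPoints (fun x => gmul0 x (e k)))ᶜ ∩ (fixedPoints (fun x => gmul0 (e k) x))ᶜ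
  have hNopen : IsOpen N := isOpen_compl_singleton.inter <| isOpen_iInter_of_finite fun k =>
    (isClosed_fixedPoints (hsep _).2).isOpen_compl.inter
      (isClosed_fixedPoints (hsep _).1).isOpen_compl
  have hgN : some g ∈ N := by
    refine ⟨Option.some_ne_none g, Set.mem_iInter.2 fun k => ⟨?_, ?_⟩⟩
    · exact fun h => (gmul_idem_mulSingle_ne_iff g k M).2 (le_sup_right.trans (hM k))
        (Option.some_injective _ h)
    · exact fun h => (idem_mulSingle_gmul_ne_iff g k M).2 (le_sup_left.trans (hM (g.1 k)))
        (Option.some_injective _ h)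
  have hNfin : N.Finite := by
    refine ((Set.finite_univ.prod ((Set.finite_Iic fun _ => M).prod
      (Set.finite_Iic fun _ => M))).image some).subset ?_
    rintro x ⟨hx0, hx⟩
    obtain ⟨s, rfl⟩ := Option.ne_none_iff_exists'.1 hx0
    have hs := Set.mem_iInter.1 hx
    refine ⟨s, ⟨trivial, fun i => ?_, fun i => ?_⟩, rfl⟩
    · simpa using (idem_mulSingle_gmul_ne_iff s (s.1.symm i) M).1
        fun h => (hs (s.1.symm i)).2 (congrArg some h)
    · exact (gmul_idem_mulSingle_ne_iff s i M).1 fun h => (hs i).1 (congrArg some h)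
  exact isOpen_singleton_of_finite_mem_nhds _ (hNopen.mem_nhds hgN) hNfin

section Fibres

variable {A : Set (Gel n)}

/-- If infinitely many pairs `(β, u)` occur in `A`, one of them carries a whole orbit of the right
translation raising `v j`, which fixes `(β, u)`; if finitely many occur, pigeonhole applies. -/
lemma exists_infinite_fibre (hA : A.Infinite)
    (hstep : ∀ j, AlmostMapsTo (fun s => gmul s (1, 1, Pi.mulSingle j 2)) A) :
    ∃ β u, {v | (β, u, v) ∈ A}.Infinite := by
  obtain ⟨j⟩ : Nonempty (Fin n) := by
    by_contra h
    have : IsEmpty (Fin n) := not_nonempty_iff.1 h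
    exact hA A.toFinite
  set π : Gel n → Equiv.Perm (Fin n) × (Fin n → ℕ+) := fun s => (s.1, s.2.1)
  by_cases hπ : (π '' A).Finite
  · obtain ⟨p, -, hp⟩ : ∃ p ∈ π '' A, (A ∩ π ⁻¹' {p}).Infinite := by
      by_contra! h
      exact hA ((hπ.biUnion h).subset fun s hs =>
        Set.mem_biUnion (Set.mem_image_of_mem π hs) ⟨hs, rfl⟩)
    refine ⟨p.1, p.2, Set.Infinite.of_image (fun v => (p.1, p.2, v)) (hp.mono ?_)⟩
    rintro s ⟨hs, rfl⟩
    exact ⟨s.2.2, hs, rfl⟩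
  · set f := fun s : Gel n => gmul s (1, 1, Pi.mulSingle j 2)
    have hf : ∀ s, f s = (s.1, s.2.1, Function.update s.2.2 j (s.2.2 j + 1)) := fun s =>
      gmul_mulSingle_two s j
    have hπf : ∀ s, π (f s) = π s := fun s => by rw [hf]
    obtain ⟨s, -, horbit⟩ := (hstep j).exists_forall_iterate_mem hπf hπ
    have hπt : ∀ t, π (f^[t] s) = π s := fun t => by
      simpa using Function.Semiconj.iterate_right (gb := id) hπf t s
    have hmono : StrictMono fun t => (f^[t] s).2.2 j := strictMono_nat_of_lt_succ fun t => by
      simp only [Function.iterate_succ_apply', hf, Function.update_self]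
      exact PNat.lt_add_right _ _
    refine ⟨s.1, s.2.1, Set.infinite_of_injective_forall_mem (f := fun t => (f^[t] s).2.2)
      (fun t t' h => hmono.injective (congrFun h j)) fun t => ?_⟩
    have h := hπt t
    simp only [π, Prod.mk.injEq] at h
    rw [Set.mem_ofPred_eq, ← h.1, ← h.2]
    exact horbit t

lemma infinite_line (hA : A.Infinite) (hleft : ∀ g, AlmostMapsTo (gmul g) A)
    (hright : ∀ g, AlmostMapsTo (fun s => gmul s g) A) (σ : Equiv.Perm (Fin n))
    (a : Fin n → ℕ+) : {v | (σ, a, v) ∈ A}.Infinite := by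
  obtain ⟨β, u, hβu⟩ := exists_infinite_fibre hA fun j => hright _
  set g : Gel n := (β⁻¹ * σ, a ∘ β, u ∘ β)
  have hE : {v | (β, u, v) ∈ A ∧ gmul g (β, u, v) ∉ A}.Finite :=
    Set.Finite.preimage (fun _ _ _ _ h => congrArg (·.2.2) h) (hleft g)
  refine (hβu.sdiff hE).mono fun v hv => ?_
  rw [Set.mem_ofPred_eq, ← gmul_transport β σ a u v]
  by_contra h
  exact hv.2 ⟨hv.1, h⟩

end Fibres

end Gel

/-- Lemma 1.6: in a Hausdorff locally compact non-discrete semitopological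
topology on `S⁰`, for every open neighbourhood `U` of the zero, every
permutation `σ` and every `a ∈ ℕⁿ`, the set `L_σ^a \ U` is finite. -/
theorem L_diff_U_finite {n : ℕ} [TopologicalSpace (Option (Gel n))]
    [T2Space (Option (Gel n))] [LocallyCompactSpace (Option (Gel n))]
    (hsep : ∀ a : Option (Gel n),
      Continuous (fun x => gmul0 a x) ∧ Continuous (fun x => gmul0 x a))
    (hnd : ¬ DiscreteTopology (Option (Gel n)))
    (U : Set (Option (Gel n))) (hU : IsOpen U) (h0 : none ∈ U)
    (σ : Equiv.Perm (Fin n)) (a : Fin n → ℕ+) :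
    {x : Fin n → ℕ+ | some (σ, a, x) ∉ U}.Finite := by
  have hiso : ∀ x ≠ none, IsOpen {x} := fun _ => Gel.isOpen_singleton_of_ne_none hsep
  obtain ⟨K, hK, hK0⟩ := exists_compact_mem_nhds (none : Option (Gel n))
  set A : Set (Gel n) := some ⁻¹' K
  have hA : A.Infinite := fun hfin =>
    infinite_of_mem_nhds_of_isOpen_singleton hiso hnd hK0 <|
      ((hfin.image some).insert none).subset fun x hx => by cases x <;> simp [A, hx]
  have hleft : ∀ g, AlmostMapsTo (gmul g) A := fun g =>
    (almostMapsTo_of_isCompact hiso hK hK0 (hsep (some g)).1 rfl).preimage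
      (Option.some_injective _) fun _ => rfl
  have hright : ∀ g, AlmostMapsTo (fun s => gmul s g) A := fun g =>
    (almostMapsTo_of_isCompact hiso hK hK0 (hsep (some g)).2 rfl).preimage
      (Option.some_injective _) fun _ => rfl
  have hline := Gel.infinite_line hA hleft hright σ a
  obtain ⟨y₀, hy₀⟩ := exists_Ici_subset_of_almostMapsTo hline fun j =>
    (hright _).preimage (fun _ _ h => congrArg (·.2.2) h) fun _ => Gel.gmul_mulSingle_two _ j
  have hKU := hK.finite_diff_of_isOpen_singleton hiso
    (hU.preimage (hsep (some (1, y₀ + 1, 1))).2) h0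
  refine (Set.Finite.preimage (fun _ _ _ _ h => add_left_cancel
      (congrArg (·.2.2) (Option.some_injective _ h))) hKU).subset
    fun x hx => ⟨hy₀ fun i => (PNat.lt_add_right (y₀ i) (x i)).le, ?_⟩
  show gmul0 (some (σ, a, y₀ + x)) (some (1, y₀ + 1, 1)) ∉ U
  rwa [gmul0, Gel.gmul_shift]
end

section
/- In the semigroup $S=\mathscr{S}_n\ltimes(\mathbb{N}\times\mathbb{N})^n$ with operation $(\alpha,[\mathbf{x},\mathbf{y}])\cdot(\beta,[\mathbf{u},\mathbf{v}]) = (\alpha\circ\beta,\ [(\mathbf{x})\beta+\max\{(\mathbf{y})\beta,\mathbf{u}\}-(\mathbf{y})\beta,\ \mathbf{v}+\max\{(\mathbf{y})\beta,\mathbf{u}\}-\mathbf{u}])$, for all fixed elements $s,t\in S$ the sets $\{x\in S : s\cdot x = t\}$ and $\{x\in S : x\cdot s = t\}$ are finite. -/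
/-!
The permutation part of a solution ranges over a finite group, so it suffices to bound its two
tuples coordinatewise. If `a·b = c` with `a = (α,[x,y])`, `b = (β,[u,v])`, `c = (γ,[z,w])`, then
`(x)β ≤ z`, `u ≤ z + (y)β`, `v ≤ w` and `(y)β ≤ w + u`. In `s·x = t` this bounds the tuples of `x`
by those of `t` and `s`; in `x·s = t` it bounds them after the fixed permutation of `s` is undone.
-/

lemma Set.Finite.of_forall_snd_le {α β γ : Type*} [Finite α]
    [Preorder β] [LocallyFiniteOrderBot β] [Preorder γ] [LocallyFiniteOrderBot γ]
    {s : Set (α × β × γ)} (B : α → β) (C : α → γ)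
    (h : ∀ x ∈ s, x.2.1 ≤ B x.1 ∧ x.2.2 ≤ C x.1) : s.Finite := by
  refine (Set.finite_iUnion fun a =>
    (Set.finite_singleton a).prod ((Set.finite_Iic (B a)).prod (Set.finite_Iic (C a)))).subset ?_
  intro x hx
  exact Set.mem_iUnion.2 ⟨x.1, rfl, h x hx⟩

namespace PNat

-- The truncation in `ℕ+`-subtraction never fires here: `q < p + max q r`.
lemma coe_add_max_sub (p q r : ℕ+) :
    ((p + max q r - q : ℕ+) : ℕ) = p + max (q : ℕ) r - q := by
  have hq : q < p + max q r := lt_add_of_pos_of_le p.pos (le_max_left q r)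
  rw [PNat.sub_coe, if_pos hq, PNat.add_coe]
  rfl

lemma le_add_max_sub (p q r : ℕ+) : p ≤ p + max q r - q := by
  rw [← PNat.coe_le_coe, coe_add_max_sub]
  omega

lemma le_add_max_sub_add (p q r : ℕ+) : r ≤ p + max q r - q + q := by
  rw [← PNat.coe_le_coe, PNat.add_coe, coe_add_max_sub]
  omega

end PNat

section Gel

variable {n : ℕ}

lemma ract_le_iff (σ : Equiv.Perm (Fin n)) (x y : Fin n → ℕ+) :
    ract σ x ≤ y ↔ x ≤ ract σ.symm y := by
  refine ⟨fun h i => ?_, fun h i => ?_⟩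
  · simpa [ract] using h (σ i)
  · simpa [ract] using h (σ.symm i)

lemma ract_le_gmul_fst_tuple (a b : Gel n) : ract b.1 a.2.1 ≤ (gmul a b).2.1 :=
  fun _ => PNat.le_add_max_sub _ _ _

lemma le_gmul_fst_tuple_add (a b : Gel n) :
    b.2.1 ≤ (gmul a b).2.1 + ract b.1 a.2.2 :=
  fun _ => PNat.le_add_max_sub_add _ _ _

lemma le_gmul_snd_tuple (a b : Gel n) : b.2.2 ≤ (gmul a b).2.2 := fun i => by
  have h := PNat.le_add_max_sub (b.2.2 i) (b.2.1 i) (ract b.1 a.2.2 i)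
  rwa [max_comm] at h

lemma ract_le_gmul_snd_tuple_add (a b : Gel n) :
    ract b.1 a.2.2 ≤ (gmul a b).2.2 + b.2.1 := fun i => by
  have h := PNat.le_add_max_sub_add (b.2.2 i) (b.2.1 i) (ract b.1 a.2.2 i)
  rwa [max_comm] at h

lemma finite_setOf_gmul_left_eq (s t : Gel n) : {x : Gel n | gmul s x = t}.Finite :=
  Set.Finite.of_forall_snd_le (fun σ => t.2.1 + ract σ s.2.2) (fun _ => t.2.2)
    fun x hx => ⟨hx ▸ le_gmul_fst_tuple_add s x, hx ▸ le_gmul_snd_tuple s x⟩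

lemma finite_setOf_gmul_right_eq (s t : Gel n) : {x : Gel n | gmul x s = t}.Finite :=
  Set.Finite.of_forall_snd_le (fun _ => ract s.1.symm t.2.1)
    (fun _ => ract s.1.symm (t.2.2 + s.2.1)) fun x hx =>
      ⟨(ract_le_iff _ _ _).1 (hx ▸ ract_le_gmul_fst_tuple x s),
        (ract_le_iff _ _ _).1 (hx ▸ ract_le_gmul_snd_tuple_add x s)⟩

end Gel

/-- In the semigroup `S = 𝒮ₙ ⋉ (ℕ × ℕ)ⁿ`, every first-order equation
`s·x = t` or `x·s = t` has only finitely many solutions. -/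
theorem gel_equations_finite {n : ℕ} (s t : Gel n) :
    {x : Gel n | gmul s x = t}.Finite ∧ {x : Gel n | gmul x s = t}.Finite :=
  ⟨finite_setOf_gmul_left_eq s t, finite_setOf_gmul_right_eq s t⟩
end

section
/- If a Hausdorff locally compact semitopological semigroup structure on $S^0$ (the semigroup $\mathscr{S}_n\ltimes(\mathbb{N}\times\mathbb{N})^n$ with adjoined zero) is not discrete, then its topology coincides with the one-point compactification topology: points of $S$ are isolated and neighbourhoods of $0$ are exactly the cofinite sets containing $0$. Consequently, every Hausdorff locally compact semitopological topology on $S^0$ is either discrete or compact. -/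
/-!
The idempotent `(1, w, w)` fixes `t = (σ, u, v)` from the left iff `w ≤ u ∘ σ`, and from the right
iff `w ≤ v`. Since translations are continuous and the space is Hausdorff, the points moved by
suitable such idempotents form an open set, which is a finite box of `S` around a given `s`; so
every point of `S` is isolated and every compact set missing `0` is finite.

If `0` is not isolated, let `K` be a compact neighbourhood of `0` and `T = K ∩ S`, an infinite set.
By continuity at `0`, each translation moves only finitely many points of `T` out of `T`. Applying
this to the finitely many translations that change one coordinate of `u` or `v` by one, or permute
the coordinates, we find a box outside of which `T` is closed under these unit steps. The
complement of a box is connected by unit steps, and `T` meets it, so `T` is cofinite in `S`. Then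
`S⁰ = K ∪ (S \ T)` is compact, and an open set containing `0` has compact, hence finite, complement.
-/

open Function Order Set Filter Topology

theorem PNat.covBy_iff_add_one_eq {a b : ℕ+} : a ⋖ b ↔ a + 1 = b := by
  rw [← succ_eq_iff_covBy, PNat.succ_eq_add_one]

section Walk

variable {α : Type*} [LinearOrder α] [SuccOrder α] [IsSuccArchimedean α]

theorem of_covBy_steps_uIcc {Q : α → Prop} {a b : α} (ha : Q a)
    (hQ : ∀ x ∈ uIcc a b, ∀ y, (x ⋖ y ∨ y ⋖ x) → Q x → Q y) : Q b := by
  rcases le_total a b with hab | hba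
  · refine Succ.rec (P := fun x _ => x ≤ b → Q x) (fun _ => ha) ?_ hab le_rfl
    intro x hax ih hxb
    have hx : x ≤ b := (le_succ x).trans hxb
    by_cases hmax : IsMax x
    · rw [succ_eq_iff_isMax.mpr hmax]; exact ih hx
    · exact hQ x (mem_uIcc_of_le hax hx) _ (.inl (covBy_succ_of_not_isMax hmax)) (ih hx)
  · refine Succ.rec (P := fun x _ => x ≤ a → Q x → Q b) (fun _ h => h) ?_ hba le_rfl ha
    intro x hbx ih hxa hQx
    have hx : x ≤ a := (le_succ x).trans hxa
    by_cases hmax : IsMax x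
    · rw [succ_eq_iff_isMax.mpr hmax] at hQx; exact ih hx hQx
    · exact ih hx (hQ _ (mem_uIcc_of_ge (hbx.trans (le_succ x)) hxa) x
        (.inr (covBy_succ_of_not_isMax hmax)) hQx)

variable {ι : Type*} [DecidableEq ι]

def StepClosed (P : Set (ι → α)) (m : ι → α) : Prop :=
  ∀ c ∈ P, ¬ c ≤ m → ∀ j x, (c j ⋖ x ∨ x ⋖ c j) → update c j x ∈ P

theorem StepClosed.update_mem {P : Set (ι → α)} {m : ι → α} (hP : StepClosed P m)
    {c : ι → α} (hc : c ∈ P) (i j : ι) (x : α) (hci : m i < c i)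
    (hxi : m i < update c j x i) : update c j x ∈ P := by
  refine of_covBy_steps_uIcc (Q := fun y => update c j y ∈ P) (a := c j) (by simpa using hc) ?_
  intro y hy z hyz hcy
  have hsafe : m i < update c j y i := by
    rcases eq_or_ne i j with rfl | hij
    · simp only [update_self] at hxi ⊢
      exact (lt_inf_iff.mpr ⟨hci, hxi⟩).trans_le hy.1
    · simpa [update_of_ne hij] using hci
  simpa using hP _ hcy (fun h => (h i).not_gt hsafe) j z (by simpa using hyz)

theorem StepClosed.mem [Fintype ι] {P : Set (ι → α)} {m : ι → α} (hP : StepClosed P m)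
    {c c' : ι → α} (hc : c ∈ P) (hcm : ¬ c ≤ m) (hc'm : ¬ c' ≤ m) : c' ∈ P := by
  -- Coordinates are moved to their targets one at a time, keeping coordinate `i` above `m i`.
  have along : ∀ i, m i < c' i → ∀ s : Finset ι, ∀ c ∈ P, m i < c i →
      (∀ k ∉ s, c k = c' k) → c' ∈ P := by
    intro i hc'i s
    induction s using Finset.induction_on with
    | empty => exact fun c hc _ hcc' => funext (fun k => hcc' k (Finset.notMem_empty k)) ▸ hc
    | insert k s hks ih =>
      intro c hc hci hcc'
      have hdi : m i < update c k (c' k) i := by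
        rcases eq_or_ne i k with rfl | hik <;> simp [*]
      refine ih _ (hP.update_mem hc i k _ hci hdi) hdi fun l hl => ?_
      rcases eq_or_ne l k with rfl | hlk
      · simp
      · simpa [update_of_ne hlk] using hcc' l (by simp [hlk, hl])
  obtain ⟨i, hci⟩ : ∃ i, m i < c i := by simpa [Pi.le_def] using hcm
  obtain ⟨j, hc'j⟩ : ∃ j, m j < c' j := by simpa [Pi.le_def] using hc'm
  have hdi : m i < update c j (c' j) i := by
    rcases eq_or_ne i j with rfl | hij <;> simp [*]
  exact along j hc'j Finset.univ _ (hP.update_mem hc i j _ hci hdi) (by simpa) (by simp)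

end Walk

section OnePoint

variable {α : Type*} [TopologicalSpace (Option α)]

theorem finite_of_isCompact_of_none_notMem (hiso : ∀ a, IsOpen ({some a} : Set (Option α)))
    {K : Set (Option α)} (hK : IsCompact K) (hnone : none ∉ K) : K.Finite := by
  refine hK.finite (isDiscrete_iff_forall_mem_exists_isOpen.mpr fun y hy => ?_)
  obtain ⟨a, rfl⟩ := Option.ne_none_iff_exists'.mp (ne_of_mem_of_not_mem hy hnone)
  exact ⟨{some a}, hiso a, by simpa⟩

theorem infinite_preimage_some_of_mem_nhds [T1Space (Option α)]
    (hnone : ¬ IsOpen ({none} : Set (Option α))) {K : Set (Option α)} (hK : K ∈ 𝓝 none) :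
    (some ⁻¹' K).Infinite := by
  intro hfin
  have hnhds : K \ some '' (some ⁻¹' K) ∈ 𝓝 none :=
    sdiff_mem hK ((hfin.image some).isClosed.compl_mem_nhds (by simp))
  refine hnone (isOpen_iff_mem_nhds.mpr ?_)
  rintro _ rfl
  refine mem_of_superset hnhds ?_
  rintro (_ | a) ⟨haK, ha⟩
  exacts [rfl, absurd ⟨a, haK, rfl⟩ ha]

theorem finite_setOf_mem_and_map_notMem (hiso : ∀ a, IsOpen ({some a} : Set (Option α)))
    {K : Set (Option α)} (hK : IsCompact K) (hKn : K ∈ 𝓝 none) {f : Option α → Option α}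
    (hf : Continuous f) (hf0 : f none = none) : {a | some a ∈ K ∧ f (some a) ∉ K}.Finite := by
  have hU : IsOpen (f ⁻¹' interior K) := isOpen_interior.preimage hf
  have hfin := finite_of_isCompact_of_none_notMem hiso (hK.diff hU)
    fun h => h.2 (by simpa [hf0] using mem_interior_iff_mem_nhds.mpr hKn)
  exact (hfin.preimage (Option.some_injective _).injOn).subset
    fun a ⟨haK, ha⟩ => ⟨haK, fun h => ha (interior_subset h)⟩

theorem isOpen_iff_finite_compl_of_none_mem [CompactSpace (Option α)] [T1Space (Option α)]
    (hiso : ∀ a, IsOpen ({some a} : Set (Option α))) {U : Set (Option α)} (hU : none ∈ U) :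
    IsOpen U ↔ Uᶜ.Finite :=
  ⟨fun h => finite_of_isCompact_of_none_notMem hiso h.isClosed_compl.isCompact (by simpa),
    fun h => isClosed_compl_iff.mp h.isClosed⟩

end OnePoint

theorem compactSpace_of_isCompact_of_finite_compl {X : Type*} [TopologicalSpace X] {K : Set X}
    (hK : IsCompact K) (hKc : Kᶜ.Finite) : CompactSpace X :=
  isCompact_univ_iff.mp (by simpa using hK.union hKc.isCompact)

namespace Gel

variable {n : ℕ}

theorem gmul_fst (a b : Gel n) : (gmul a b).1 = b.1 * a.1 := rfl

theorem coe_gmul_snd_fst (a b : Gel n) (i : Fin n) :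
    ((gmul a b).2.1 i : ℕ) =
      a.2.1 (b.1.symm i) + max (a.2.2 (b.1.symm i) : ℕ) (b.2.1 i) - a.2.2 (b.1.symm i) := by
  rw [gmul, PNat.sub_coe, if_pos ((le_max_left _ _).trans_lt (PNat.lt_add_left _ _))]
  rfl

theorem coe_gmul_snd_snd (a b : Gel n) (i : Fin n) :
    ((gmul a b).2.2 i : ℕ) = b.2.2 i + max (a.2.2 (b.1.symm i) : ℕ) (b.2.1 i) - b.2.1 i := by
  rw [gmul, PNat.sub_coe, if_pos ((le_max_right _ _).trans_lt (PNat.lt_add_left _ _))]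
  rfl

theorem ext_iff_coe {s t : Gel n} :
    s = t ↔ s.1 = t.1 ∧ ∀ i, (s.2.1 i : ℕ) = t.2.1 i ∧ (s.2.2 i : ℕ) = t.2.2 i := by
  simp [Prod.ext_iff, funext_iff, forall_and]

theorem gmul_right_raise (t : Gel n) (j : Fin n) :
    gmul t (1, 1, update 1 j 2) = (t.1, t.2.1, update t.2.2 j (t.2.2 j + 1)) := by
  refine ext_iff_coe.mpr ⟨by simp [gmul_fst], fun i => ?_⟩
  have := (t.2.2 i).pos
  rw [coe_gmul_snd_fst, coe_gmul_snd_snd]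
  rcases eq_or_ne i j with rfl | hij <;>
    simp only [← Equiv.Perm.inv_def, inv_one, Equiv.Perm.coe_one, id_eq, Pi.one_apply,
      PNat.val_ofNat, PNat.add_coe, update_self, update_of_ne, ne_eq, not_false_eq_true, *] <;>
    omega

theorem gmul_right_lower (t : Gel n) (j : Fin n) (x : ℕ+) (hx : t.2.2 j = x + 1) :
    gmul t (1, update 1 j 2, 1) = (t.1, t.2.1, update t.2.2 j x) := by
  refine ext_iff_coe.mpr ⟨by simp [gmul_fst], fun i => ?_⟩
  have := (t.2.2 i).pos
  have := x.pos
  rw [coe_gmul_snd_fst, coe_gmul_snd_snd]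
  rcases eq_or_ne i j with rfl | hij <;>
    simp only [← Equiv.Perm.inv_def, inv_one, Equiv.Perm.coe_one, id_eq, Pi.one_apply,
      PNat.val_ofNat, PNat.add_coe, update_self, update_of_ne, ne_eq, not_false_eq_true, *] <;>
    omega

theorem gmul_left_raise (t : Gel n) (i : Fin n) :
    gmul (1, update 1 i 2, 1) t = (t.1, update t.2.1 (t.1 i) (t.2.1 (t.1 i) + 1), t.2.2) := by
  refine ext_iff_coe.mpr ⟨by simp [gmul_fst], fun k => ?_⟩
  have := (t.2.1 k).pos
  rw [coe_gmul_snd_fst, coe_gmul_snd_snd]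
  rcases eq_or_ne k (t.1 i) with rfl | hk
  · simp only [Equiv.symm_apply_apply, update_self, Pi.one_apply, PNat.val_ofNat, PNat.add_coe]
    omega
  · have hk' : t.1.symm k ≠ i := by rwa [Ne, Equiv.symm_apply_eq]
    simp only [update_of_ne hk, update_of_ne hk', Pi.one_apply, PNat.val_ofNat]
    omega

theorem gmul_left_lower (t : Gel n) (i : Fin n) (x : ℕ+) (hx : t.2.1 (t.1 i) = x + 1) :
    gmul (1, 1, update 1 i 2) t = (t.1, update t.2.1 (t.1 i) x, t.2.2) := by
  refine ext_iff_coe.mpr ⟨by simp [gmul_fst], fun k => ?_⟩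
  have := (t.2.1 k).pos
  have := x.pos
  rw [coe_gmul_snd_fst, coe_gmul_snd_snd]
  rcases eq_or_ne k (t.1 i) with rfl | hk
  · simp only [Equiv.symm_apply_apply, update_self, Pi.one_apply, PNat.val_ofNat, PNat.add_coe,
      hx]
    omega
  · have hk' : t.1.symm k ≠ i := by rwa [Ne, Equiv.symm_apply_eq]
    simp only [update_of_ne hk, update_of_ne hk', Pi.one_apply, PNat.val_ofNat]
    omega

theorem gmul_right_perm (t : Gel n) (δ : Equiv.Perm (Fin n)) :
    gmul t (δ, 1, 1) = (δ * t.1, t.2.1 ∘ δ.symm, t.2.2 ∘ δ.symm) := by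
  refine ext_iff_coe.mpr ⟨rfl, fun k => ?_⟩
  have := (t.2.2 (δ.symm k)).pos
  rw [coe_gmul_snd_fst, coe_gmul_snd_snd]
  simp only [Pi.one_apply, PNat.val_ofNat, comp_apply]
  omega

theorem gmul_idem_left_eq_self_iff (w : Fin n → ℕ+) (t : Gel n) :
    gmul (1, w, w) t = t ↔ w ≤ t.2.1 ∘ t.1 := by
  simp only [ext_iff_coe, coe_gmul_snd_fst, coe_gmul_snd_snd, gmul_fst, mul_one, true_and,
    Pi.le_def, comp_apply, ← PNat.coe_le_coe]
  refine ⟨fun h i => ?_, fun h i => ?_⟩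
  · have := h (t.1 i)
    simp only [Equiv.symm_apply_apply] at this
    omega
  · have := h (t.1.symm i)
    simp only [Equiv.apply_symm_apply] at this
    omega

theorem gmul_idem_right_eq_self_iff (w : Fin n → ℕ+) (t : Gel n) :
    gmul t (1, w, w) = t ↔ w ≤ t.2.2 := by
  simp only [ext_iff_coe, coe_gmul_snd_fst, coe_gmul_snd_snd, gmul_fst, one_mul, true_and,
    Pi.le_def, ← PNat.coe_le_coe, ← Equiv.Perm.inv_def, inv_one, Equiv.Perm.one_apply]
  exact ⟨fun h i => by have := h i; omega, fun h i => by have := h i; omega⟩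

theorem gmul_update_one_left_eq_self_iff (i : Fin n) (k : ℕ+) (t : Gel n) :
    gmul (1, update 1 i k, update 1 i k) t = t ↔ k ≤ t.2.1 (t.1 i) := by
  simp [gmul_idem_left_eq_self_iff, update_le_iff, fun j => one_le (a := t.2.1 (t.1 j))]

theorem gmul_update_one_right_eq_self_iff (i : Fin n) (k : ℕ+) (t : Gel n) :
    gmul t (1, update 1 i k, update 1 i k) = t ↔ k ≤ t.2.2 i := by
  simp [gmul_idem_right_eq_self_iff, update_le_iff, fun j => one_le (a := t.2.2 j)]

def coords (t : Gel n) : Fin n ⊕ Fin n → ℕ+ := Sum.elim t.2.1 t.2.2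

def box (b : ℕ+) : Set (Gel n) := {t | coords t ≤ fun _ => b}

theorem finite_box (b : ℕ+) : (box b : Set (Gel n)).Finite := by
  have hinj : Injective fun t : Gel n => (t.1, coords t) := fun s t hst => by
    simp only [Prod.mk.injEq, coords] at hst
    exact Prod.ext hst.1
      (Prod.ext (congrArg (· ∘ Sum.inl) hst.2) (congrArg (· ∘ Sum.inr) hst.2))
  exact ((finite_univ.prod (finite_Iic _)).preimage hinj.injOn).subset
    fun t ht => ⟨mem_univ _, ht⟩

theorem mem_box_iff {t : Gel n} {b : ℕ+} :
    t ∈ box b ↔ t.2.1 ≤ (fun _ => b) ∧ t.2.2 ≤ fun _ => b := by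
  simp [box, Pi.le_def, coords, Sum.forall]

theorem gmul_right_perm_mem_box_iff (t : Gel n) (δ : Equiv.Perm (Fin n)) {b : ℕ+} :
    gmul t (δ, 1, 1) ∈ box b ↔ t ∈ box b := by
  rw [gmul_right_perm, mem_box_iff, mem_box_iff]
  simp only [Pi.le_def, comp_apply]
  exact and_congr (δ.symm.forall_congr_right (q := fun i => t.2.1 i ≤ b))
    (δ.symm.forall_congr_right (q := fun i => t.2.2 i ≤ b))

theorem update_one_le_two (i : Fin n) : update (1 : Fin n → ℕ+) i 2 ≤ fun _ => 2 :=
  update_le_iff.mpr ⟨le_rfl, fun _ _ => one_le⟩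

theorem stepClosed_of_translation_closed {T : Set (Gel n)} {b : ℕ+}
    (hT : ∀ t ∈ T, t ∉ box b → ∀ a ∈ box 2, gmul a t ∈ T ∧ gmul t a ∈ T)
    (σ : Equiv.Perm (Fin n)) :
    StepClosed {c | (σ, c ∘ Sum.inl, c ∘ Sum.inr) ∈ T} (fun _ => b) := by
  intro c hc hcb k x hx
  obtain ⟨u, v, rfl⟩ : ∃ u v, Sum.elim u v = c := ⟨_, _, Sum.elim_comp_inl_inr c⟩
  have hstep := hT _ hc hcb
  simp only [PNat.covBy_iff_add_one_eq] at hx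
  rcases k with i | j
  · simp only [mem_ofPred_eq, Sum.update_elim_inl, Sum.elim_comp_inl, Sum.elim_comp_inr] at hx ⊢
    rcases hx with hx | hx
    · simpa [gmul_left_raise, ← hx] using (hstep (1, update 1 (σ.symm i) 2, 1)
        (mem_box_iff.mpr ⟨update_one_le_two _, fun _ => one_le⟩)).1
    · have h := (hstep (1, 1, update 1 (σ.symm i) 2)
        (mem_box_iff.mpr ⟨fun _ => one_le, update_one_le_two _⟩)).1
      rwa [gmul_left_lower _ _ x (by simpa using hx.symm), Equiv.apply_symm_apply] at h
  · simp only [mem_ofPred_eq, Sum.update_elim_inr, Sum.elim_comp_inl, Sum.elim_comp_inr] at hx ⊢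
    rcases hx with hx | hx
    · simpa [gmul_right_raise, ← hx] using (hstep (1, 1, update 1 j 2)
        (mem_box_iff.mpr ⟨fun _ => one_le, update_one_le_two j⟩)).2
    · have h := (hstep (1, update 1 j 2, 1)
        (mem_box_iff.mpr ⟨update_one_le_two j, fun _ => one_le⟩)).2
      rwa [gmul_right_lower _ _ x hx.symm] at h

theorem finite_compl_of_translations {T : Set (Gel n)} (hT : T.Infinite)
    (hl : ∀ a, {t | t ∈ T ∧ gmul a t ∉ T}.Finite)
    (hr : ∀ a, {t | t ∈ T ∧ gmul t a ∉ T}.Finite) : Tᶜ.Finite := by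
  -- `box 2` contains the unit steps `(1, update 1 i 2, 1)`, `(1, 1, update 1 i 2)` and the
  -- permutations `(δ, 1, 1)`.
  set E := ⋃ a ∈ (box 2 : Set (Gel n)),
    ({t | t ∈ T ∧ gmul a t ∉ T} ∪ {t | t ∈ T ∧ gmul t a ∉ T})
  have hE : E.Finite := (finite_box 2).biUnion fun a _ => (hl a).union (hr a)
  obtain ⟨b, hb⟩ : ∃ b : ℕ+, E ⊆ box b := by
    obtain ⟨b, hb⟩ := (hE.biUnion fun t _ => finite_range (coords t)).bddAbove
    exact ⟨b, fun t ht k => hb (mem_biUnion ht (mem_range_self k))⟩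
  have hstable : ∀ t ∈ T, t ∉ box b → ∀ a ∈ box 2, gmul a t ∈ T ∧ gmul t a ∈ T := by
    intro t ht htb a ha
    by_contra h
    refine htb (hb (mem_biUnion ha ?_))
    rcases not_and_or.mp h with h | h
    exacts [.inl ⟨ht, h⟩, .inr ⟨ht, h⟩]
  obtain ⟨t₀, ht₀, ht₀b⟩ := (hT.sdiff (finite_box b)).nonempty
  refine (finite_box b).subset fun s hs => by_contra fun hsb => hs ?_
  set t₁ := gmul t₀ (s.1 * t₀.1⁻¹, 1, 1)
  have ht₁ : t₁ ∈ T :=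
    (hstable t₀ ht₀ ht₀b _ (mem_box_iff.mpr ⟨fun _ => one_le, fun _ => one_le⟩)).2
  have ht₁s : t₁.1 = s.1 := by simp [t₁, gmul_fst]
  have ht₁b : t₁ ∉ box b := by rwa [gmul_right_perm_mem_box_iff]
  refine (stepClosed_of_translation_closed hstable s.1).mem (c := coords t₁) ?_ ht₁b hsb
  show (s.1, t₁.2.1, t₁.2.2) ∈ T
  rwa [← ht₁s]

theorem isOpen_singleton_some [TopologicalSpace (Option (Gel n))] [T2Space (Option (Gel n))]
    (hsep : ∀ a : Option (Gel n),
      Continuous (fun x => gmul0 a x) ∧ Continuous (fun x => gmul0 x a))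
    (s : Gel n) : IsOpen ({some s} : Set (Option (Gel n))) := by
  obtain ⟨k, hk⟩ : ∃ k : ℕ+, ∀ j, coords s j < k := by
    obtain ⟨b, hb⟩ := (finite_range (coords s)).bddAbove
    exact ⟨b + 1, fun j => (hb (mem_range_self j)).trans_lt (PNat.lt_add_right b 1)⟩
  set e : Fin n → Option (Gel n) := fun i => some (1, update 1 i k, update 1 i k)
  set N := {none}ᶜ ∩ ⋂ i, {x | gmul0 (e i) x ≠ x} ∩ {x | gmul0 x (e i) ≠ x}
  refine isOpen_singleton_of_finite_mem_nhds _ (s := N) (IsOpen.mem_nhds ?_ ?_) ?_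
  · exact isOpen_compl_singleton.inter (isOpen_iInter_of_finite fun i =>
      (isOpen_ne_fun (hsep _).1 continuous_id).inter (isOpen_ne_fun (hsep _).2 continuous_id))
  · refine ⟨Option.some_ne_none s, mem_iInter.mpr fun i => ⟨fun h => ?_, fun h => ?_⟩⟩
    · exact (hk (.inl (s.1 i))).not_ge
        ((gmul_update_one_left_eq_self_iff i k s).mp (Option.some_injective _ h))
    · exact (hk (.inr i)).not_ge
        ((gmul_update_one_right_eq_self_iff i k s).mp (Option.some_injective _ h))
  · refine ((finite_box k).image some).subset ?_
    rintro (_ | t) ⟨hne, ht⟩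
    · exact absurd rfl hne
    have hl (i : Fin n) : ¬ k ≤ t.2.1 (t.1 i) := fun h =>
      (mem_iInter.mp ht i).1 (congrArg some ((gmul_update_one_left_eq_self_iff i k t).mpr h))
    have hr (i : Fin n) : ¬ k ≤ t.2.2 i := fun h =>
      (mem_iInter.mp ht i).2 (congrArg some ((gmul_update_one_right_eq_self_iff i k t).mpr h))
    refine ⟨t, mem_box_iff.mpr ⟨fun j => ?_, fun j => (not_le.mp (hr j)).le⟩, rfl⟩
    simpa using (not_le.mp (hl (t.1.symm j))).le

end Gel

/-- The main theorem (dichotomy): a Hausdorff locally compact semitopological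
topology on `S⁰ = (𝒮ₙ ⋉ (ℕ×ℕ)ⁿ)⁰` is either discrete, or it is the compact
one-point compactification topology: every point of `S` is isolated and the
open sets containing the zero are exactly the cofinite ones. -/
theorem dichotomy {n : ℕ} [TopologicalSpace (Option (Gel n))]
    [T2Space (Option (Gel n))] [LocallyCompactSpace (Option (Gel n))]
    (hsep : ∀ a : Option (Gel n),
      Continuous (fun x => gmul0 a x) ∧ Continuous (fun x => gmul0 x a)) :
    DiscreteTopology (Option (Gel n)) ∨
      (CompactSpace (Option (Gel n)) ∧
       (∀ s : Gel n, IsOpen ({some s} : Set (Option (Gel n)))) ∧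
       (∀ U : Set (Option (Gel n)), none ∈ U → (IsOpen U ↔ (Uᶜ).Finite))) := by
  have hiso := Gel.isOpen_singleton_some hsep
  by_cases hnone : IsOpen ({none} : Set (Option (Gel n)))
  · exact .inl (discreteTopology_iff_isOpen_singleton.mpr fun | none => hnone | some s => hiso s)
  obtain ⟨K, hK, hKn⟩ := exists_compact_mem_nhds (none : Option (Gel n))
  have hcof : (some ⁻¹' K)ᶜ.Finite := Gel.finite_compl_of_translations
    (infinite_preimage_some_of_mem_nhds hnone hKn)
    (fun a => finite_setOf_mem_and_map_notMem hiso hK hKn (hsep (some a)).1 rfl)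
    (fun a => finite_setOf_mem_and_map_notMem hiso hK hKn (hsep (some a)).2 rfl)
  have : CompactSpace (Option (Gel n)) := compactSpace_of_isCompact_of_finite_compl hK <|
    (hcof.image some).subset fun
      | none, h => absurd (mem_of_mem_nhds hKn) h
      | some a, h => ⟨a, h, rfl⟩
  exact .inr ⟨this, hiso, fun U hU => isOpen_iff_finite_compl_of_none_mem hiso hU⟩
end
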